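/- arXiv:2006.06876 — 4 statements merged into one kernel-verified Lean document; each statement's English description precedes it below -/
import Mathlib

section
/- Let Γ be a finite group and F a Γ-lattice. Then F is flasque if and only if Ext^1_Γ(F, P) = 0 for every permutation Γ-lattice P. -/
/-! Basic definitions for Γ-lattices over a finite group Γ. -/

/-- A `Γ`-lattice: a finitely generated free `ℤ`-module equipped with a
`ℤ`-linear action of `Γ`, i.e. a `ℤ[Γ]`-module which is finitely generated
and free as a `ℤ`-module. -/
structure GammaLattice (Γ : Type) [Group Γ] where
  carrier : Type
  [isAddCommGroup : AddCommGroup carrier]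
  [isModule : Module ℤ carrier]
  ρ : Representation ℤ Γ carrier
  free : Module.Free ℤ carrier
  finite : Module.Finite ℤ carrier

attribute [instance] GammaLattice.isAddCommGroup GammaLattice.isModule

variable {Γ : Type} [Group Γ]

/-- A `ℤ`-linear map between `Γ`-representations is equivariant (i.e. is a
`ℤ[Γ]`-module homomorphism) if it commutes with the `Γ`-actions. -/
def IsEquivariantMap {M N : Type} [AddCommGroup M] [Module ℤ M]
    [AddCommGroup N] [Module ℤ N]
    (ρM : Representation ℤ Γ M) (ρN : Representation ℤ Γ N)
    (f : M →ₗ[ℤ] N) : Prop :=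
  ∀ (γ : Γ) (m : M), f (ρM γ m) = ρN γ (f m)

/-- A short exact sequence `0 → A → B → C → 0` of `ℤ[Γ]`-modules. -/
def IsShortExactSeq {A B C : Type} [AddCommGroup A] [Module ℤ A]
    [AddCommGroup B] [Module ℤ B] [AddCommGroup C] [Module ℤ C]
    (ρA : Representation ℤ Γ A) (ρB : Representation ℤ Γ B)
    (ρC : Representation ℤ Γ C)
    (f : A →ₗ[ℤ] B) (g : B →ₗ[ℤ] C) : Prop :=
  IsEquivariantMap ρA ρB f ∧ IsEquivariantMap ρB ρC g ∧
    Function.Injective f ∧ Function.Surjective g ∧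
    LinearMap.range f = LinearMap.ker g

/-- A `Γ`-lattice is a permutation lattice if it has a `ℤ`-basis permuted
by `Γ`. -/
def GammaLattice.IsPermutation (L : GammaLattice Γ) : Prop :=
  ∃ (ι : Type) (b : Module.Basis ι ℤ L.carrier),
    ∀ (γ : Γ) (i : ι), ∃ j : ι, L.ρ γ (b i) = b j

/-- A `Γ`-lattice is invertible if it is a direct summand of a permutation
`Γ`-lattice. -/
def GammaLattice.IsInvertible (L : GammaLattice Γ) : Prop :=
  ∃ N : GammaLattice Γ, N.IsPermutation ∧
    ∃ (i : L.carrier →ₗ[ℤ] N.carrier) (p : N.carrier →ₗ[ℤ] L.carrier),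
      IsEquivariantMap L.ρ N.ρ i ∧ IsEquivariantMap N.ρ L.ρ p ∧
        p.comp i = LinearMap.id

/-- A `Γ`-lattice is coflasque if `H¹(Γ', M) = 0` for every subgroup
`Γ' ≤ Γ`. -/
def GammaLattice.IsCoflasque (L : GammaLattice Γ) : Prop :=
  ∀ Γ' : Subgroup Γ,
    Subsingleton (groupCohomology.H1 (Rep.of (L.ρ.comp Γ'.subtype)))

/-- The dual lattice `M^∨ = Hom_ℤ(M, ℤ)` with the action
`(γ · f)(m) = f(γ⁻¹ · m)`. -/
noncomputable def GammaLattice.dual (L : GammaLattice Γ) : GammaLattice Γ where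
  carrier := Module.Dual ℤ L.carrier
  ρ := L.ρ.dual
  free := by have := L.free; have := L.finite; infer_instance
  finite := by have := L.free; have := L.finite; infer_instance

/-- A `Γ`-lattice is flasque if its dual is coflasque. -/
noncomputable def GammaLattice.IsFlasque (L : GammaLattice Γ) : Prop :=
  L.dual.IsCoflasque

/-- `Ext¹_Γ(A, B) = 0`, formulated as: every short exact sequence of
`ℤ[Γ]`-modules `0 → B → E → A → 0` splits (admits an equivariant section). -/
def Ext1Vanishes {A B : Type} [AddCommGroup A] [Module ℤ A]
    [AddCommGroup B] [Module ℤ B]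
    (ρA : Representation ℤ Γ A) (ρB : Representation ℤ Γ B) : Prop :=
  ∀ (E : Type) [AddCommGroup E] [Module ℤ E],
    ∀ (ρE : Representation ℤ Γ E) (ι : B →ₗ[ℤ] E) (π : E →ₗ[ℤ] A),
      IsShortExactSeq ρB ρE ρA ι π →
      ∃ s : A →ₗ[ℤ] E, IsEquivariantMap ρA ρE s ∧ π.comp s = LinearMap.id

/-- The direct sum (product) of two representations. -/
def prodRep {M N : Type} [AddCommGroup M] [Module ℤ M]
    [AddCommGroup N] [Module ℤ N]
    (ρM : Representation ℤ Γ M) (ρN : Representation ℤ Γ N) :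
    Representation ℤ Γ (M × N) where
  toFun γ := (ρM γ).prodMap (ρN γ)
  map_one' := by ext x <;> simp
  map_mul' g h := by ext x <;> simp [Module.End.mul_apply]

/-!
For a `ℤ`-free `Γ`-module `F`, every extension of `F` by `P` splits `ℤ`-linearly, and the failure
of a `ℤ`-linear section to be equivariant is a 1-cocycle of `Γ` in `Hom(F, P)`; so
`Ext¹_Γ(F, P) = 0` amounts to `H¹(Γ, Hom(F, P)) = 0`. When `P` has a basis permuted by `Γ`
through a finite `Γ`-set `X`, taking coordinates identifies `Hom(F, P)` with the coinduced module
`X → F^∨`, and Shapiro's lemma reduces its `H¹` to the groups `H¹(Γ_x, F^∨)` for the stabilizers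
`Γ_x`. Flasqueness therefore kills `Ext¹_Γ(F, P)`; conversely `P = ℤ[Γ/H]` has `H` as the
stabilizer of the trivial coset, which recovers `H¹(H, F^∨) = 0`.
-/

universe u

namespace Representation

/-- The module structure is an implicit argument, read off from `ρ`: over `ℤ`, instance search
finds `AddCommGroup.toIntModule` on `V →ₗ[ℤ] W` rather than the instance `linHom` is built on. -/
def H1Vanishes {k G V : Type*} [CommRing k] [Group G] [AddCommGroup V] {_ : Module k V}
    (ρ : Representation k G V) : Prop :=
  ∀ c : G → V, (∀ g h, c (g * h) = ρ g (c h) + c g) → ∃ v, ∀ g, c g = ρ g v - v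

theorem subsingleton_H1_iff {k G V : Type u} [CommRing k] [Group G]
    [AddCommGroup V] [Module k V] (ρ : Representation k G V) :
    Subsingleton (groupCohomology.H1 (Rep.of ρ)) ↔ ρ.H1Vanishes := by
  constructor
  · intro _ c hc
    have hmem : c ∈ groupCohomology.cocycles₁ (Rep.of ρ) :=
      (groupCohomology.mem_cocycles₁_iff (A := Rep.of ρ) c).2 hc
    obtain ⟨v, hv⟩ := (groupCohomology.H1π_eq_zero_iff
      (⟨c, hmem⟩ : groupCohomology.cocycles₁ (Rep.of ρ))).1 (Subsingleton.elim _ _)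
    exact ⟨v, fun g => (congrFun hv g).symm⟩
  · intro h
    refine subsingleton_of_forall_eq 0 fun x => groupCohomology.H1_induction_on x fun c => ?_
    obtain ⟨v, hv⟩ := h c ((groupCohomology.mem_cocycles₁_iff c).1 c.2)
    exact (groupCohomology.H1π_eq_zero_iff c).2 ⟨v, funext fun g => (hv g).symm⟩

variable {k G V W : Type*} [CommRing k] [Group G] [AddCommGroup V] [Module k V]
  [AddCommGroup W] [Module k W]

theorem H1Vanishes.of_linearEquiv {ρ : Representation k G V} {σ : Representation k G W}
    (e : V ≃ₗ[k] W) (he : ∀ g v, e (ρ g v) = σ g (e v)) (hρ : ρ.H1Vanishes) :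
    σ.H1Vanishes := by
  have he' : ∀ g w, e.symm (σ g w) = ρ g (e.symm w) := fun g w => by
    rw [e.symm_apply_eq, he, e.apply_symm_apply]
  intro c hc
  obtain ⟨v, hv⟩ := hρ (e.symm ∘ c) fun g h => by simp [hc, he']
  exact ⟨e v, fun g => by rw [← he, ← map_sub, ← hv, Function.comp_apply, e.apply_symm_apply]⟩

theorem h1Vanishes_congr {ρ : Representation k G V} {σ : Representation k G W}
    (e : V ≃ₗ[k] W) (he : ∀ g v, e (ρ g v) = σ g (e v)) : ρ.H1Vanishes ↔ σ.H1Vanishes :=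
  ⟨.of_linearEquiv e he, .of_linearEquiv e.symm fun g w => by
    rw [e.symm_apply_eq, he, e.apply_symm_apply]⟩

section Shapiro

variable (ρ : Representation k G V) (X : Type*) [MulAction G X]

/-- The product over the orbits of `X` of the modules coinduced from the stabilizers. -/
def funOn : Representation k G (X → V) where
  toFun g := LinearMap.pi fun x => ρ g ∘ₗ LinearMap.proj (g⁻¹ • x)
  map_one' := by ext; simp
  map_mul' g h := by ext; simp [mul_smul]

variable {ρ X}

@[simp]
theorem funOn_apply (g : G) (f : X → V) (x : X) : ρ.funOn X g f x = ρ g (f (g⁻¹ • x)) := rfl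

theorem h1Vanishes_funOn
    (hρ : ∀ x : X, H1Vanishes (ρ.comp (MulAction.stabilizer G x).subtype)) :
    (ρ.funOn X).H1Vanishes := by
  intro c hc
  have hc' : ∀ g h x, c (g * h) x = ρ g (c h (g⁻¹ • x)) + c g x := fun g h x => by
    rw [hc]; rfl
  choose v hv using fun x => hρ x (fun h => c h x) fun a b => by
    simp [hc', MulAction.mem_stabilizer_iff.1 (inv_mem a.2)]
  let r : X → X := fun x => (Quotient.mk (MulAction.orbitRel G X) x).out
  have hr : ∀ γ x, r (γ • x) = r x := fun γ x =>
    congrArg Quotient.out (Quotient.sound (MulAction.mem_orbit x γ))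
  have hrx : ∀ x, ∃ g : G, g • r x = x := fun x =>
    (MulAction.orbitRel G X).iseqv.symm (Quotient.mk_out (s := MulAction.orbitRel G X) x)
  choose g hg using hrx
  -- transport the coboundary `v (r x)` of the orbit representative `r x` to `x` along `g x`
  refine ⟨fun x => ρ (g x) (v (r x)) - c (g x) x, fun γ => funext fun x => ?_⟩
  obtain ⟨y, rfl⟩ := MulAction.surjective γ x
  have hgx : (g (γ • y))⁻¹ • γ • y = r y := by rw [inv_smul_eq_iff, ← hr γ y, hg]
  let h : MulAction.stabilizer G (r y) := ⟨(g (γ • y))⁻¹ * γ * g y, by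
    rw [MulAction.mem_stabilizer_iff, mul_smul, mul_smul, hg, hgx]⟩
  have hgh : g (γ • y) * h = γ * g y := by simp [h, mul_assoc]
  have hρh : ρ (g (γ • y)) (ρ h (v (r y))) = ρ γ (ρ (g y) (v (r y))) := by
    rw [← Module.End.mul_apply, ← map_mul, hgh, map_mul, Module.End.mul_apply]
  have h₁ := hc' γ (g y) (γ • y)
  have h₂ := hc' (g (γ • y)) h (γ • y)
  rw [hgx, hv, hgh, MonoidHom.comp_apply, Subgroup.coe_subtype, map_sub, hρh] at h₂
  rw [inv_smul_smul] at h₁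
  simp only [Pi.sub_apply, funOn_apply, hr, inv_smul_smul, map_sub]
  linear_combination (norm := module) h₂ - h₁

theorem h1Vanishes_comp_stabilizer_of_funOn [MulAction.IsPretransitive G X] (x₀ : X)
    (hρ : (ρ.funOn X).H1Vanishes) :
    H1Vanishes (ρ.comp (MulAction.stabilizer G x₀).subtype) := by
  intro u hu
  obtain ⟨t, ht, ht₀⟩ : ∃ t : X → G, (∀ x, t x • x₀ = x) ∧ t x₀ = 1 := by
    classical
    choose t ht using MulAction.exists_smul_eq G x₀
    refine ⟨Function.update t x₀ 1, fun x => ?_, Function.update_self ..⟩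
    rcases eq_or_ne x x₀ with rfl | hx
    · simp
    · simp [hx, ht]
  -- the cocycle induced from `u` along the coset representatives `t`
  let w (γ : G) (x : X) : MulAction.stabilizer G x₀ := ⟨(t x)⁻¹ * γ * t (γ⁻¹ • x), by
    rw [MulAction.mem_stabilizer_iff, mul_smul, mul_smul, ht, smul_inv_smul, inv_smul_eq_iff, ht]⟩
  have hw : ∀ γ δ x, w (γ * δ) x = w γ x * w δ (γ⁻¹ • x) := fun γ δ x =>
    Subtype.ext (by simp [w, mul_smul, mul_assoc])
  have htw : ∀ γ x, t x * w γ x = γ * t (γ⁻¹ • x) := fun γ x => by simp [w, mul_assoc]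
  obtain ⟨f, hf⟩ := hρ (fun γ x => ρ (t x) (u (w γ x))) fun γ δ => funext fun x => by
    rw [hw, hu, MonoidHom.comp_apply, Subgroup.coe_subtype, map_add, ← Module.End.mul_apply,
      ← map_mul, htw, map_mul, Module.End.mul_apply]
    rfl
  refine ⟨f x₀, fun h => ?_⟩
  have hh : (h : G)⁻¹ • x₀ = x₀ := MulAction.mem_stabilizer_iff.1 (inv_mem h.2)
  have hw₀ : w h x₀ = h := Subtype.ext (by simp [w, ht₀, hh])
  simpa [hw₀, ht₀, hh] using congrFun (hf h) x₀

end Shapiro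

section PermutationBasis

variable {X : Type*} {ρ : Representation k G W}

theorem exists_mulAction_of_basis_permuted [Nontrivial k] (b : Module.Basis X k W)
    (hb : ∀ g x, ∃ y, ρ g (b x) = b y) : ∃ _ : MulAction G X, ∀ g x, ρ g (b x) = b (g • x) := by
  choose σ hσ using hb
  let _ : MulAction G X :=
    { smul := σ
      one_smul := fun x => b.injective <| (hσ 1 x).symm.trans <| by simp
      mul_smul := fun g h x => b.injective <| (hσ (g * h) x).symm.trans <| by
        rw [map_mul, Module.End.mul_apply, hσ, hσ]; rfl }
  exact ⟨inferInstance, hσ⟩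

variable [MulAction G X] {b : Module.Basis X k W}

theorem basis_repr_of_permuted (hb : ∀ g x, ρ g (b x) = b (g • x)) (g : G) (w : W) (x : X) :
    b.repr (ρ g w) x = b.repr w (g⁻¹ • x) := by
  suffices b.coord x ∘ₗ ρ g = b.coord (g⁻¹ • x) from LinearMap.congr_fun this w
  classical
  refine b.ext fun y => ?_
  simp only [LinearMap.comp_apply, Module.Basis.coord_apply, hb, Module.Basis.repr_self,
    Finsupp.single_apply, smul_eq_iff_eq_inv_smul]

variable [Finite X] (ρV : Representation k G V)

noncomputable def linHomEquivFunOnDual (b : Module.Basis X k W) :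
    (V →ₗ[k] W) ≃ₗ[k] (X → Module.Dual k V) :=
  (LinearEquiv.congrRight b.equivFun).trans (LinearEquiv.linearMapPi k).symm

theorem linHomEquivFunOnDual_apply (f : V →ₗ[k] W) (x : X) (v : V) :
    linHomEquivFunOnDual b f x v = b.repr (f v) x := rfl

theorem linHomEquivFunOnDual_linHom (hb : ∀ g x, ρ g (b x) = b (g • x)) (g : G)
    (f : V →ₗ[k] W) : linHomEquivFunOnDual b (ρV.linHom ρ g f) =
      ρV.dual.funOn X g (linHomEquivFunOnDual b f) := by
  ext x v
  simp [linHomEquivFunOnDual_apply, linHom_apply, dual_apply, Module.Dual.transpose_apply,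
    basis_repr_of_permuted hb]

theorem h1Vanishes_linHom_iff_funOn_dual (hb : ∀ g x, ρ g (b x) = b (g • x)) :
    (ρV.linHom ρ).H1Vanishes ↔ (ρV.dual.funOn X).H1Vanishes :=
  h1Vanishes_congr _ (linHomEquivFunOnDual_linHom ρV hb)

end PermutationBasis

theorem ofMulAction_basis {X : Type*} [MulAction G X] (g : G) (x : X) :
    ofMulAction k G X g (MonoidAlgebra.basis X k x) = MonoidAlgebra.basis X k (g • x) := by
  simp

section Cocycle

variable {ρV : Representation k G V} {ρW : Representation k G W}

def ofCocycle (c : G → V →ₗ[k] W) (hc : ∀ g h, c (g * h) = ρV.linHom ρW g (c h) + c g) :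
    Representation k G (W × V) where
  toFun g := (ρW g).prodMap (ρV g) + LinearMap.inl k W V ∘ₗ c g ∘ₗ ρV g ∘ₗ LinearMap.snd k W V
  map_one' := by
    have hc₁ : c 1 = 0 := by simpa using hc 1 1
    ext <;> simp [hc₁]
  map_mul' g h := by ext <;> simp [hc, linHom_apply]

@[simp]
theorem ofCocycle_apply (c : G → V →ₗ[k] W)
    (hc : ∀ g h, c (g * h) = ρV.linHom ρW g (c h) + c g) (g : G) (x : W × V) :
    ofCocycle c hc g x = (ρW g x.1 + c g (ρV g x.2), ρV g x.2) := by
  simp [ofCocycle]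

end Cocycle

end Representation

section Extensions

variable {M N : Type} [AddCommGroup M] [Module ℤ M] [AddCommGroup N] [Module ℤ N]
  {ρM : Representation ℤ Γ M} {ρN : Representation ℤ Γ N}

theorem IsEquivariantMap.comp_linHom {E : Type} [AddCommGroup E] [Module ℤ E]
    {ρE : Representation ℤ Γ E} {ι : N →ₗ[ℤ] E} (hι : IsEquivariantMap ρN ρE ι)
    (g : Γ) (f : M →ₗ[ℤ] N) : ι ∘ₗ ρM.linHom ρN g f = ρM.linHom ρE g (ι ∘ₗ f) := by
  ext m
  simpa [Representation.linHom_apply] using hι g _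

theorem ext1Vanishes_of_h1Vanishes_linHom [Module.Projective ℤ M]
    (h : (ρM.linHom ρN).H1Vanishes) : Ext1Vanishes ρM ρN := by
  intro E _ _ ρE ι π ⟨hι, hπ, hinj, hsurj, hexact⟩
  have hexact' : Function.Exact ι π := LinearMap.exact_iff.2 hexact.symm
  obtain ⟨s₀, hs₀⟩ := Module.projective_lifting_property π LinearMap.id hsurj
  obtain ⟨q, hq⟩ : ∃ q : E →ₗ[ℤ] N, q ∘ₗ ι = LinearMap.id :=
    ((hexact'.split_tfae hinj hsurj).out 0 1).1 (⟨s₀, hs₀⟩ : ∃ s, π ∘ₗ s = LinearMap.id)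
  have hπs : ∀ m, π (s₀ m) = m := LinearMap.congr_fun hs₀
  have hqι : ∀ n, q (ι n) = n := LinearMap.congr_fun hq
  -- the defect of equivariance of `s₀` takes values in `ι N`, and `q` pulls it back to a cocycle
  let D (g : Γ) : M →ₗ[ℤ] E := ρM.linHom ρE g s₀ - s₀
  have hD : ∀ g, ι ∘ₗ q ∘ₗ D g = D g := fun g => by
    ext m
    obtain ⟨n, hn⟩ : D g m ∈ LinearMap.range ι := by
      rw [hexact, LinearMap.mem_ker]
      simp [D, Representation.linHom_apply, hπ g, hπs]
    simp [← hn, hqι]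
  have hDmul : ∀ g h, D (g * h) = ρM.linHom ρE g (D h) + D g := fun g h => by
    simp only [D, map_mul, Module.End.mul_apply, map_sub]
    abel
  obtain ⟨f, hf⟩ := h (fun g => q ∘ₗ D g) fun g h => by
    rw [← LinearMap.cancel_left hinj, LinearMap.comp_add, hι.comp_linHom]
    simp only [hD]
    exact hDmul g h
  have hs : ∀ g, ρM.linHom ρE g (s₀ - ι ∘ₗ f) = s₀ - ι ∘ₗ f := fun g => calc
    _ = (D g + s₀) - ι ∘ₗ ρM.linHom ρN g f := by
      rw [map_sub, ← hι.comp_linHom, sub_add_cancel]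
    _ = s₀ - ι ∘ₗ f := by
      rw [← hD g, hf g, LinearMap.comp_sub]
      abel
  refine ⟨s₀ - ι ∘ₗ f, fun g m => ?_, ?_⟩
  · simpa [Representation.linHom_apply] using (LinearMap.congr_fun (hs g) (ρM g m)).symm
  · rw [LinearMap.comp_sub, hs₀, ← LinearMap.comp_assoc, hexact'.linearMap_comp_eq_zero,
      LinearMap.zero_comp, sub_zero]

theorem h1Vanishes_linHom_of_ext1Vanishes (h : Ext1Vanishes ρM ρN) :
    (ρM.linHom ρN).H1Vanishes := by
  intro c hc
  -- instance search would find `AddCommGroup.toIntModule`, not the module `ofCocycle` is built on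
  let _ : Module ℤ (N × M) := Prod.instModule
  obtain ⟨s, hs, hsnd⟩ := h (N × M) (Representation.ofCocycle c hc) (LinearMap.inl ℤ N M)
    (LinearMap.snd ℤ N M) ⟨fun g n => by simp, fun g x => by simp,
      LinearMap.inl_injective, Prod.snd_surjective, LinearMap.range_inl ℤ N M⟩
  have hsnd' : ∀ m, (s m).2 = m := LinearMap.congr_fun hsnd
  refine ⟨-(LinearMap.fst ℤ N M ∘ₗ s), fun g => LinearMap.ext fun m => ?_⟩
  have := congrArg Prod.fst (hs g (ρM g⁻¹ m))
  simp only [Representation.self_inv_apply, Representation.ofCocycle_apply, hsnd'] at this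
  simp [Representation.linHom_apply, this]

end Extensions

namespace GammaLattice

theorem isFlasque_iff (L : GammaLattice Γ) :
    L.IsFlasque ↔ ∀ H : Subgroup Γ, Representation.H1Vanishes (L.ρ.dual.comp H.subtype) :=
  forall_congr' fun _ => Representation.subsingleton_H1_iff _

variable (Γ) in
noncomputable def ofMulAction (X : Type) [MulAction Γ X] [Finite X] : GammaLattice Γ where
  carrier := MonoidAlgebra ℤ X
  ρ := Representation.ofMulAction ℤ Γ X
  free := .of_basis (MonoidAlgebra.basis X ℤ)
  finite := .of_basis (MonoidAlgebra.basis X ℤ)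

theorem isPermutation_ofMulAction (X : Type) [MulAction Γ X] [Finite X] :
    (ofMulAction Γ X).IsPermutation :=
  ⟨X, MonoidAlgebra.basis X ℤ, fun g x => ⟨g • x, Representation.ofMulAction_basis g x⟩⟩

end GammaLattice

/-- A Γ-lattice `F` is flasque if and only if
`Ext¹_Γ(F, P) = 0` for every permutation Γ-lattice `P`. -/
theorem flasque_iff_ext1_perm_vanishes
    {Γ : Type} [Group Γ] [Finite Γ] (F : GammaLattice Γ) :
    F.IsFlasque ↔
      ∀ P : GammaLattice Γ, P.IsPermutation → Ext1Vanishes F.ρ P.ρ := by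
  have := F.free
  rw [F.isFlasque_iff]
  constructor
  · rintro hF P ⟨X, b, hb⟩
    have := P.finite
    have : Finite X := Module.Finite.finite_basis b
    obtain ⟨_, hb⟩ := Representation.exists_mulAction_of_basis_permuted b hb
    refine ext1Vanishes_of_h1Vanishes_linHom ?_
    exact (Representation.h1Vanishes_linHom_iff_funOn_dual F.ρ hb).2
      (Representation.h1Vanishes_funOn fun _ => hF _)
  · intro hext H
    rw [← MulAction.stabilizer_quotient H]
    refine Representation.h1Vanishes_comp_stabilizer_of_funOn _ ?_
    refine (Representation.h1Vanishes_linHom_iff_funOn_dual F.ρ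
      Representation.ofMulAction_basis).1 ?_
    exact h1Vanishes_linHom_of_ext1Vanishes (hext _ (GammaLattice.isPermutation_ofMulAction _))
end

section
/- Let Γ be a finite group and M a Γ-lattice. Suppose 0 → C → P →^α M → 0 is a short exact sequence of Γ-lattices with C coflasque and P permutation (a coflasque resolution of the first type). Then for every invertible Γ-lattice P' and every ℤ[Γ]-module homomorphism f : P' → M there exists a ℤ[Γ]-module homomorphism g : P' → P with α ∘ g = f. -/
variable {Γ : Type} [Group Γ]

/-!
An invertible lattice is a retract of a permutation lattice, so it suffices to lift maps out
of a permutation lattice with basis `(b i)` permuted by `Γ`. Such a map is determined by the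
images of orbit representatives `i`, which may be any vectors fixed by the stabilizer `Γᵢ`.
Lifting `f (b i) ∈ M^{Γᵢ}` to `P^{Γᵢ}` is obstructed only by a class in `H¹(Γᵢ, C)`, which
vanishes because `C` is coflasque.
-/

open groupCohomology MulAction

theorem IsEquivariantMap.comp {A B C : Type} [AddCommGroup A] [Module ℤ A]
    [AddCommGroup B] [Module ℤ B] [AddCommGroup C] [Module ℤ C]
    {ρA : Representation ℤ Γ A} {ρB : Representation ℤ Γ B} {ρC : Representation ℤ Γ C}
    {g : B →ₗ[ℤ] C} {f : A →ₗ[ℤ] B}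
    (hg : IsEquivariantMap ρB ρC g) (hf : IsEquivariantMap ρA ρB f) :
    IsEquivariantMap ρA ρC (g.comp f) :=
  fun γ a => by rw [LinearMap.comp_apply, hf, hg, LinearMap.comp_apply]

theorem exists_eq_sub_of_subsingleton_H1 {G A : Type} [Group G] [AddCommGroup A] [Module ℤ A]
    (ρ : Representation ℤ G A) [Subsingleton (H1 (Rep.of ρ))]
    (c : G → A) (hc : ∀ g h : G, c (g * h) = ρ g (c h) + c g) :
    ∃ x : A, ∀ g : G, c g = ρ g x - x := by
  have hcocycle : c ∈ cocycles₁ (Rep.of ρ) := (mem_cocycles₁_iff (A := Rep.of ρ) c).2 hc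
  obtain ⟨x, hx⟩ :=
    (H1π_eq_zero_iff (⟨c, hcocycle⟩ : cocycles₁ (Rep.of ρ))).1 (Subsingleton.elim _ _)
  exact ⟨x, fun g => (congrFun hx g).symm⟩

theorem IsShortExactSeq.exists_fixed_preimage {A B C : Type} [AddCommGroup A] [Module ℤ A]
    [AddCommGroup B] [Module ℤ B] [AddCommGroup C] [Module ℤ C]
    {ρA : Representation ℤ Γ A} {ρB : Representation ℤ Γ B} {ρC : Representation ℤ Γ C}
    {ι : A →ₗ[ℤ] B} {α : B →ₗ[ℤ] C} (hse : IsShortExactSeq ρA ρB ρC ι α)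
    (S : Subgroup Γ) [Subsingleton (H1 (Rep.of (ρA.comp S.subtype)))]
    {m : C} (hm : ∀ γ ∈ S, ρC γ m = m) :
    ∃ e : B, α e = m ∧ ∀ γ ∈ S, ρB γ e = e := by
  obtain ⟨hι, hα, hι_inj, hα_surj, hexact⟩ := hse
  obtain ⟨e, rfl⟩ := hα_surj m
  have hdefect : ∀ γ : S, ∃ c : A, ι c = ρB γ e - e := fun γ => by
    have : ρB γ e - e ∈ LinearMap.ker α := by
      rw [LinearMap.mem_ker, map_sub, hα, hm γ γ.2, sub_self]
    rwa [← hexact] at this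
  choose c hc using hdefect
  have hcocycle : ∀ γ δ : S, c (γ * δ) = ρA.comp S.subtype γ (c δ) + c γ := fun γ δ =>
    hι_inj <| by
      rw [map_add, MonoidHom.comp_apply, Subgroup.coe_subtype, hι, hc, hc, hc, Subgroup.coe_mul,
        map_mul, Module.End.mul_apply, map_sub]
      abel
  obtain ⟨x, hx⟩ := exists_eq_sub_of_subsingleton_H1 _ c hcocycle
  have hιx : α (ι x) = 0 := LinearMap.mem_ker.1 (hexact ▸ LinearMap.mem_range_self ι x)
  refine ⟨e - ι x, by rw [map_sub, hιx, sub_zero], fun γ hγ => ?_⟩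
  have hγe : ρB γ e = e + ι (c ⟨γ, hγ⟩) := by rw [hc]; abel
  rw [map_sub, hγe, ← hι, hx ⟨γ, hγ⟩, MonoidHom.comp_apply, Subgroup.coe_subtype, map_sub]
  abel

theorem GammaLattice.IsPermutation.exists_mulAction {L : GammaLattice Γ}
    (hL : L.IsPermutation) :
    ∃ (I : Type) (_ : MulAction Γ I) (b : Module.Basis I ℤ L.carrier),
      ∀ γ i, L.ρ γ (b i) = b (γ • i) := by
  obtain ⟨I, b, hb⟩ := hL
  choose act hact using hb
  have hact_one : ∀ i, act 1 i = i := fun i =>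
    b.injective (by rw [← hact, map_one, Module.End.one_apply])
  have hact_mul : ∀ γ δ i, act (γ * δ) i = act γ (act δ i) := fun γ δ i =>
    b.injective (by rw [← hact, ← hact, ← hact, map_mul, Module.End.mul_apply])
  exact ⟨I, { smul := act, one_smul := hact_one, mul_smul := hact_mul }, b, hact⟩

theorem exists_equivariant_of_forall_exists_stabilizer_fixed {I B : Type} [MulAction Γ I]
    [AddCommGroup B] [Module ℤ B] (ρ : Representation ℤ Γ B) (Q : I → B → Prop)
    (hQ : ∀ γ i x, Q i x → Q (γ • i) (ρ γ x))
    (hfixed : ∀ i, ∃ x, Q i x ∧ ∀ γ ∈ stabilizer Γ i, ρ γ x = x) :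
    ∃ w : I → B, (∀ i, Q i (w i)) ∧ ∀ γ i, w (γ • i) = ρ γ (w i) := by
  choose v hvQ hvfixed using hfixed
  let rep : I → I := fun i => (Quotient.mk (orbitRel Γ I) i).out
  have hrep_smul : ∀ γ i, rep (γ • i) = rep i := fun γ i =>
    congrArg Quotient.out (Quotient.sound (mem_orbit i γ))
  have hrep_orbit : ∀ i, ∃ γ : Γ, γ • rep i = i := fun i =>
    mem_orbit_symm.1 (Quotient.mk_out (s := orbitRel Γ I) i)
  choose τ hτ using hrep_orbit
  have hwell_defined :
      ∀ {r : I} {γ δ : Γ}, γ • r = δ • r → ρ γ (v r) = ρ δ (v r) := by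
    intro r γ δ h
    have hstab : δ⁻¹ * γ ∈ stabilizer Γ r := by
      rw [mem_stabilizer_iff, mul_smul, h, inv_smul_smul]
    calc ρ γ (v r) = ρ δ (ρ (δ⁻¹ * γ) (v r)) := by
          rw [← Module.End.mul_apply, ← map_mul, mul_inv_cancel_left]
      _ = ρ δ (v r) := by rw [hvfixed r _ hstab]
  refine ⟨fun i => ρ (τ i) (v (rep i)), fun i => ?_, fun γ i => ?_⟩
  · simpa only [hτ] using hQ (τ i) _ _ (hvQ (rep i))
  · dsimp only
    rw [← Module.End.mul_apply, ← map_mul, ← hrep_smul γ i]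
    refine hwell_defined ?_
    rw [hτ, mul_smul, hrep_smul, hτ]

theorem Module.Basis.isEquivariantMap_constr {I N B : Type} [MulAction Γ I]
    [AddCommGroup N] [Module ℤ N] [AddCommGroup B] [Module ℤ B]
    {ρN : Representation ℤ Γ N} {ρB : Representation ℤ Γ B}
    (b : Module.Basis I ℤ N) (hb : ∀ γ i, ρN γ (b i) = b (γ • i))
    {w : I → B} (hw : ∀ γ i, w (γ • i) = ρB γ (w i)) :
    IsEquivariantMap ρN ρB (b.constr ℕ w) := fun γ n => by
  have : (b.constr ℕ w).comp (ρN γ) = (ρB γ).comp (b.constr ℕ w) :=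
    b.ext fun i => by simp only [LinearMap.comp_apply, hb, Module.Basis.constr_basis, hw]
  exact LinearMap.congr_fun this n

theorem exists_lift_of_isPermutation (C P M : GammaLattice Γ) (hC : C.IsCoflasque)
    (ι : C.carrier →ₗ[ℤ] P.carrier) (α : P.carrier →ₗ[ℤ] M.carrier)
    (hse : IsShortExactSeq C.ρ P.ρ M.ρ ι α)
    (N : GammaLattice Γ) (hN : N.IsPermutation)
    (f : N.carrier →ₗ[ℤ] M.carrier) (hf : IsEquivariantMap N.ρ M.ρ f) :
    ∃ g : N.carrier →ₗ[ℤ] P.carrier, IsEquivariantMap N.ρ P.ρ g ∧ α.comp g = f := by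
  obtain ⟨I, _, b, hb⟩ := hN.exists_mulAction
  have hlift_equivariant : ∀ γ i x, α x = f (b i) → α (P.ρ γ x) = f (b (γ • i)) :=
    fun γ i x hx => by rw [hse.2.1, hx, ← hf, hb]
  have hfixed_lift :
      ∀ i, ∃ x, α x = f (b i) ∧ ∀ γ ∈ stabilizer Γ i, P.ρ γ x = x := fun i =>
    have := hC (stabilizer Γ i)
    hse.exists_fixed_preimage _ fun γ hγ => by rw [← hf, hb, mem_stabilizer_iff.1 hγ]
  obtain ⟨w, hwα, hw⟩ :=
    exists_equivariant_of_forall_exists_stabilizer_fixed P.ρ _ hlift_equivariant hfixed_lift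
  exact ⟨b.constr ℕ w, b.isEquivariantMap_constr hb hw,
    b.ext fun i => by rw [LinearMap.comp_apply, Module.Basis.constr_basis, hwα]⟩

theorem coflasque_resolution_first_type_versal_general
    {Γ : Type} [Group Γ]
    (C P M : GammaLattice Γ) (hC : C.IsCoflasque)
    (ι : C.carrier →ₗ[ℤ] P.carrier) (α : P.carrier →ₗ[ℤ] M.carrier)
    (hse : IsShortExactSeq C.ρ P.ρ M.ρ ι α)
    (P' : GammaLattice Γ) (hP' : P'.IsInvertible)
    (f : P'.carrier →ₗ[ℤ] M.carrier) (hf : IsEquivariantMap P'.ρ M.ρ f) :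
    ∃ g : P'.carrier →ₗ[ℤ] P.carrier,
      IsEquivariantMap P'.ρ P.ρ g ∧ α.comp g = f := by
  obtain ⟨N, hN, i, p, hi, hp, hpi⟩ := hP'
  obtain ⟨g, hg, hαg⟩ :=
    exists_lift_of_isPermutation C P M hC ι α hse N hN (f.comp p) (hf.comp hp)
  refine ⟨g.comp i, hg.comp hi, ?_⟩
  rw [← LinearMap.comp_assoc, hαg, LinearMap.comp_assoc, hpi, LinearMap.comp_id]

/-- versality of coflasque resolutions of the first type:
given `0 → C → P →[α] M → 0` with `C` coflasque and `P` permutation,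
any map from an invertible lattice `P'` to `M` factors through `α`. -/
theorem coflasque_resolution_first_type_versal
    {Γ : Type} [Group Γ] [Finite Γ]
    (C P M : GammaLattice Γ) (hC : C.IsCoflasque) (hP : P.IsPermutation)
    (ι : C.carrier →ₗ[ℤ] P.carrier) (α : P.carrier →ₗ[ℤ] M.carrier)
    (hse : IsShortExactSeq C.ρ P.ρ M.ρ ι α)
    (P' : GammaLattice Γ) (hP' : P'.IsInvertible)
    (f : P'.carrier →ₗ[ℤ] M.carrier) (hf : IsEquivariantMap P'.ρ M.ρ f) :
    ∃ g : P'.carrier →ₗ[ℤ] P.carrier,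
      IsEquivariantMap P'.ρ P.ρ g ∧ α.comp g = f :=
  coflasque_resolution_first_type_versal_general C P M hC ι α hse P' hP' f hf
end

section
/- Let Γ be a finite group and M a Γ-lattice. Suppose 0 → M →^α C → P → 0 is a short exact sequence of Γ-lattices with C coflasque and P permutation (a coflasque resolution of the second type), and suppose 0 → M →^γ N → Q → 0 is a short exact sequence of Γ-lattices with Q invertible. Then there exists a ℤ[Γ]-module homomorphism φ : N → C such that φ ∘ γ = α. -/
variable {Γ : Type} [Group Γ]

/-!
Push the extension `0 → M → N → Q → 0` out along `α`: this gives an extension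
`0 → C → E → Q → 0` together with `j : N → E` agreeing with `α` on `M`, and a retraction `E → C`
composed with `j` is the required `φ`. So it suffices that every such extension splits. Pulling
back along a retraction `S → Q` from a permutation lattice `S` reduces this to extensions of `S`
by `C`. If `b i` is a basis vector of `S` with stabiliser `Γᵢ`, the obstruction to lifting `b i`
to a `Γᵢ`-fixed vector is a class in `H¹(Γᵢ, C)`, which vanishes because `C` is coflasque;
translating one such lift per orbit around the orbit gives an equivariant section.
-/

universe u

open groupCohomology

theorem exists_sub_eq_of_mem_cocycles₁ {k G V : Type u} [CommRing k] [Group G]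
    [AddCommGroup V] [Module k V] {ρ : Representation k G V} [Subsingleton (H1 (Rep.of ρ))]
    {c : G → V} (hc : c ∈ cocycles₁ (Rep.of ρ)) : ∃ x : V, ∀ g, ρ g x - x = c g := by
  have hπ : H1π (Rep.of ρ) ⟨c, hc⟩ = 0 := Subsingleton.elim _ _
  obtain ⟨x, hx⟩ := (H1π_eq_zero_iff _).1 hπ
  exact ⟨x, fun g => by have h := congrFun hx g; rwa [d₀₁_hom_apply] at h⟩

theorem Module.Basis.exists_mulAction_of_permutes {k G κ V : Type*} [Semiring k] [Nontrivial k]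
    [Monoid G] [AddCommMonoid V] [Module k V] {ρ : Representation k G V} (b : Basis κ k V)
    (hb : ∀ g i, ∃ j, ρ g (b i) = b j) : ∃ _ : MulAction G κ, ∀ g i, ρ g (b i) = b (g • i) := by
  choose act hact using hb
  exact ⟨{ smul := act
           one_smul := fun i => b.injective (by change b (act 1 i) = b i; rw [← hact, map_one]; rfl)
           mul_smul := fun g h i => b.injective (by
             change b (act (g * h) i) = b (act g (act h i))
             rw [← hact, ← hact, ← hact, map_mul, Module.End.mul_apply]) }, hact⟩

theorem exists_equivariant_of_fixed_by_stabilizer {k G κ V : Type*} [Semiring k] [Group G]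
    [MulAction G κ] [AddCommMonoid V] [Module k V] (ρ : Representation k G V) (e : κ → V)
    (he : ∀ i (σ : G), σ • i = i → ρ σ (e i) = e i) :
    ∃ v : κ → V, (∀ g i, v (g • i) = ρ g (v i)) ∧ ∀ i, ∃ g : G, v i = ρ g (e (g⁻¹ • i)) := by
  let rep : κ → κ := fun i => (Quotient.mk (MulAction.orbitRel G κ) i).out
  have hrep : ∀ i, ∃ g : G, g • rep i = i := fun i => by
    obtain ⟨g, hg⟩ := MulAction.mem_orbit_iff.mp (Quotient.mk_out (s := MulAction.orbitRel G κ) i)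
    exact ⟨g⁻¹, inv_smul_eq_iff.mpr hg.symm⟩
  have hrep_smul : ∀ g i, rep (g • i) = rep i := fun g i =>
    congrArg Quotient.out (Quotient.sound (MulAction.mem_orbit_iff.mpr ⟨g, rfl⟩))
  choose t ht using hrep
  refine ⟨fun i => ρ (t i) (e (rep i)), ?_, fun i =>
    ⟨t i, congrArg (fun j => ρ (t i) (e j)) (inv_smul_eq_iff.mpr (ht i).symm).symm⟩⟩
  have hwd : ∀ i g, g • rep i = i → ρ (t i) (e (rep i)) = ρ g (e (rep i)) := fun i g hg => by
    have hfix : (t i)⁻¹ * g ∈ MulAction.stabilizer G (rep i) := by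
      rw [MulAction.mem_stabilizer_iff, mul_smul, hg]
      exact inv_smul_eq_iff.mpr (ht i).symm
    calc ρ (t i) (e (rep i)) = ρ (t i) (ρ ((t i)⁻¹ * g) (e (rep i))) := by rw [he _ _ hfix]
      _ = ρ g (e (rep i)) := by rw [← Module.End.mul_apply, ← map_mul, mul_inv_cancel_left]
  intro g i
  dsimp only
  rw [hwd (g • i) (g * t i) (by rw [mul_smul, hrep_smul, ht]), hrep_smul, map_mul,
    Module.End.mul_apply]

section Extensions

variable {A B D : Type} [AddCommGroup A] [Module ℤ A] [AddCommGroup B] [Module ℤ B]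
  [AddCommGroup D] [Module ℤ D] {ρA : Representation ℤ Γ A} {ρB : Representation ℤ Γ B}
  {ρD : Representation ℤ Γ D} {ι : A →ₗ[ℤ] B} {π : B →ₗ[ℤ] D}

theorem IsShortExactSeq.map_map_eq_zero (hse : IsShortExactSeq ρA ρB ρD ι π) (a : A) :
    π (ι a) = 0 := by
  rw [← LinearMap.mem_ker, ← hse.2.2.2.2]
  exact LinearMap.mem_range_self ι a

theorem IsShortExactSeq.exists_fixed_lift (hse : IsShortExactSeq ρA ρB ρD ι π) (H : Subgroup Γ)
    [Subsingleton (H1 (Rep.of (ρA.comp H.subtype)))] {v : D} (hv : ∀ σ ∈ H, ρD σ v = v) :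
    ∃ e, π e = v ∧ ∀ σ ∈ H, ρB σ e = e := by
  have hπι := hse.map_map_eq_zero
  obtain ⟨hι, hπ, hι_inj, hπ_surj, hexact⟩ := hse
  obtain ⟨e, rfl⟩ := hπ_surj v
  have hdefect : ∀ σ : H, ρB σ e - e ∈ LinearMap.range ι := fun σ => by
    rw [hexact, LinearMap.mem_ker, map_sub, hπ, hv σ σ.2, sub_self]
  choose c hc using hdefect
  have hcocycle : c ∈ cocycles₁ (Rep.of (ρA.comp H.subtype)) := by
    refine (mem_cocycles₁_iff (A := Rep.of (ρA.comp H.subtype)) c).2 fun g h => ?_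
    apply hι_inj
    change ι (c (g * h)) = ι (ρA g (c h) + c g)
    rw [map_add, hι, hc, hc, hc, Subgroup.coe_mul, map_mul, Module.End.mul_apply, map_sub]
    abel
  obtain ⟨x, hx⟩ := exists_sub_eq_of_mem_cocycles₁ hcocycle
  refine ⟨e - ι x, by rw [map_sub, hπι, sub_zero], fun σ hσ => ?_⟩
  have hxσ : ρA σ x = x + c ⟨σ, hσ⟩ := eq_add_of_sub_eq' (hx ⟨σ, hσ⟩)
  rw [map_sub, ← hι, hxσ, map_add, hc ⟨σ, hσ⟩]
  abel

theorem IsShortExactSeq.exists_retraction (hse : IsShortExactSeq ρA ρB ρD ι π)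
    {s : D →ₗ[ℤ] B} (hs : IsEquivariantMap ρD ρB s) (hπs : π ∘ₗ s = LinearMap.id) :
    ∃ r : B →ₗ[ℤ] A, IsEquivariantMap ρB ρA r ∧ r ∘ₗ ι = LinearMap.id := by
  have hπι := hse.map_map_eq_zero
  obtain ⟨hι, hπ, hι_inj, -, hexact⟩ := hse
  have hmem : ∀ x, (LinearMap.id - s ∘ₗ π : B →ₗ[ℤ] B) x ∈ LinearMap.range ι := fun x => by
    rw [hexact, LinearMap.mem_ker, LinearMap.sub_apply, map_sub, LinearMap.comp_apply,
      ← LinearMap.comp_apply π s, hπs, LinearMap.id_apply, LinearMap.id_apply, sub_self]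
  -- `Module ℤ` is a hypothesis here, so instances on submodules, products and quotients must be
  -- the ones built from it; instance search would find `AddCommGroup.toIntModule` instead.
  let _ : Module ℤ (LinearMap.range ι) := (LinearMap.range ι).module
  let r := (LinearEquiv.ofInjective ι hι_inj).symm.toLinearMap ∘ₗ
    (LinearMap.id - s ∘ₗ π).codRestrict _ hmem
  have hιr : ∀ x, ι (r x) = x - s (π x) := fun x =>
    congrArg Subtype.val (LinearEquiv.apply_symm_apply (LinearEquiv.ofInjective ι hι_inj) _)
  refine ⟨r, fun g x => hι_inj ?_, LinearMap.ext fun a => hι_inj ?_⟩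
  · rw [hι, hιr, hιr, hπ, hs, map_sub]
  · rw [LinearMap.comp_apply, hιr, LinearMap.id_apply, hπι, map_zero, sub_zero]

theorem IsShortExactSeq.exists_pushout {N Q : Type} [AddCommGroup N] [Module ℤ N]
    [AddCommGroup Q] [Module ℤ Q] {ρN : Representation ℤ Γ N} {ρQ : Representation ℤ Γ Q}
    {γ : A →ₗ[ℤ] N} {q : N →ₗ[ℤ] Q} (hse : IsShortExactSeq ρA ρN ρQ γ q)
    {α : A →ₗ[ℤ] D} (hα : IsEquivariantMap ρA ρD α) :
    ∃ (E : Type) (_ : AddCommGroup E) (_ : Module ℤ E) (ρE : Representation ℤ Γ E)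
      (ι' : D →ₗ[ℤ] E) (π' : E →ₗ[ℤ] Q) (j : N →ₗ[ℤ] E),
      IsShortExactSeq ρD ρE ρQ ι' π' ∧ IsEquivariantMap ρN ρE j ∧ j ∘ₗ γ = ι' ∘ₗ α := by
  have hqγ := hse.map_map_eq_zero
  obtain ⟨hγ, hq, hγ_inj, hq_surj, hexact⟩ := hse
  let _ : Module ℤ (D × N) := Prod.instModule
  let K := LinearMap.range (α.prod (-γ))
  have hK : ∀ g, K ≤ K.comap ((ρD.prod ρN) g) := by
    rintro g _ ⟨m, rfl⟩
    exact ⟨ρA g m, by simp [hα g m, hγ g m]⟩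
  have hKq : K ≤ LinearMap.ker (q ∘ₗ LinearMap.snd ℤ D N) := by
    rintro _ ⟨m, rfl⟩
    simp [hqγ]
  have hglue : ∀ m, K.mkQ (α m, 0) = K.mkQ (0, γ m) := fun m =>
    (Submodule.Quotient.eq K).2 ⟨m, by simp⟩
  let _ : Module ℤ ((D × N) ⧸ K) := Submodule.Quotient.module K
  refine ⟨_, _, _, (ρD.prod ρN).quotient K hK, K.mkQ ∘ₗ LinearMap.inl ℤ D N,
    K.liftQ _ hKq, K.mkQ ∘ₗ LinearMap.inr ℤ D N, ⟨?_, ?_, ?_, ?_, ?_⟩, ?_, ?_⟩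
  · intro g c
    simp
  · intro g e
    induction e using Submodule.Quotient.induction_on
    simpa using hq g _
  · refine (injective_iff_map_eq_zero _).2 fun c hc => ?_
    obtain ⟨m, hm⟩ := (Submodule.Quotient.mk_eq_zero K).1 hc
    have hm0 : m = 0 := hγ_inj (by simpa using congrArg Prod.snd hm)
    simpa [hm0] using (congrArg Prod.fst hm).symm
  · exact fun y => let ⟨n, hn⟩ := hq_surj y; ⟨K.mkQ (0, n), hn⟩
  · refine le_antisymm ?_ fun e he => ?_
    · rintro _ ⟨c, rfl⟩
      simp
    · induction e using Submodule.Quotient.induction_on with | H x => ?_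
      obtain ⟨m, hm⟩ : x.2 ∈ LinearMap.range γ := hexact ▸ he
      refine ⟨x.1 + α m, (Submodule.Quotient.eq K).2 ⟨m, ?_⟩⟩
      ext <;> simp [hm]
  · intro g n
    simp
  · exact LinearMap.ext fun m => (hglue m).symm

theorem IsShortExactSeq.exists_pullback {S : Type} [AddCommGroup S] [Module ℤ S]
    {ρS : Representation ℤ Γ S} (hse : IsShortExactSeq ρA ρB ρD ι π)
    {f : S →ₗ[ℤ] D} (hf : IsEquivariantMap ρS ρD f) :
    ∃ (P : Type) (_ : AddCommGroup P) (_ : Module ℤ P) (ρP : Representation ℤ Γ P)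
      (ι' : A →ₗ[ℤ] P) (π' : P →ₗ[ℤ] S) (k : P →ₗ[ℤ] B),
      IsShortExactSeq ρA ρP ρS ι' π' ∧ IsEquivariantMap ρP ρB k ∧ π ∘ₗ k = f ∘ₗ π' := by
  have hπι := hse.map_map_eq_zero
  obtain ⟨hι, hπ, hι_inj, hπ_surj, hexact⟩ := hse
  let _ : Module ℤ (B × S) := Prod.instModule
  let P := LinearMap.eqLocus (π ∘ₗ LinearMap.fst ℤ B S) (f ∘ₗ LinearMap.snd ℤ B S)
  have hP : ∀ g, P ≤ P.comap ((ρB.prod ρS) g) := fun g x (hx : π x.1 = f x.2) =>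
    show π (ρB g x.1) = f (ρS g x.2) by rw [hπ, hf, hx]
  let _ : Module ℤ P := P.module
  let ι' : A →ₗ[ℤ] P := (LinearMap.inl ℤ B S ∘ₗ ι).codRestrict P fun a =>
    show π (ι a) = f 0 by rw [hπι, map_zero]
  refine ⟨P, _, _, (ρB.prod ρS).subrepresentation P hP, ι', LinearMap.snd ℤ B S ∘ₗ P.subtype,
    LinearMap.fst ℤ B S ∘ₗ P.subtype, ⟨?_, ?_, ?_, ?_, ?_⟩, ?_, ?_⟩
  · exact fun g a => Subtype.ext (Prod.ext (hι g a) (map_zero (ρS g)).symm)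
  · intro g x
    rfl
  · intro a a' h
    exact hι_inj (congrArg (fun x : P => x.1.1) h)
  · intro y
    obtain ⟨x, hx⟩ := hπ_surj (f y)
    exact ⟨⟨(x, y), hx⟩, rfl⟩
  · refine le_antisymm ?_ fun (x : P) (hx : (x : B × S).2 = 0) => ?_
    · rintro _ ⟨a, rfl⟩
      rfl
    · obtain ⟨a, ha⟩ : x.1.1 ∈ LinearMap.range ι := by
        rw [hexact, LinearMap.mem_ker, show π x.1.1 = f x.1.2 from x.2, hx, map_zero]
      exact ⟨a, Subtype.ext (Prod.ext ha hx.symm)⟩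
  · intro g x
    rfl
  · exact LinearMap.ext fun x => x.2

end Extensions

theorem ext1Vanishes_of_permutes {C S κ : Type} [AddCommGroup C] [Module ℤ C]
    [AddCommGroup S] [Module ℤ S] {ρC : Representation ℤ Γ C} {ρS : Representation ℤ Γ S}
    (hC : ∀ H : Subgroup Γ, Subsingleton (H1 (Rep.of (ρC.comp H.subtype))))
    (b : Module.Basis κ ℤ S) (hb : ∀ g i, ∃ j, ρS g (b i) = b j) : Ext1Vanishes ρS ρC := by
  intro E _ _ ρE ι π hse
  obtain ⟨_, hact⟩ := b.exists_mulAction_of_permutes hb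
  have hlift : ∀ i, ∃ e, π e = b i ∧ ∀ σ ∈ MulAction.stabilizer Γ i, ρE σ e = e := fun i =>
    have := hC (MulAction.stabilizer Γ i)
    hse.exists_fixed_lift _ fun σ hσ => by rw [hact, MulAction.mem_stabilizer_iff.mp hσ]
  choose e he using hlift
  obtain ⟨v, hv_equiv, hv⟩ := exists_equivariant_of_fixed_by_stabilizer ρE e
    fun i σ hσ => (he i).2 σ hσ
  refine ⟨b.constr ℕ v, fun g x => ?_, b.ext fun i => ?_⟩
  · have hcomm : b.constr ℕ v ∘ₗ ρS g = ρE g ∘ₗ b.constr ℕ v :=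
      b.ext fun i => by simp [hact, hv_equiv]
    exact LinearMap.congr_fun hcomm x
  · obtain ⟨g, hg⟩ := hv i
    simp only [LinearMap.comp_apply, Module.Basis.constr_basis, LinearMap.id_apply, hg]
    rw [hse.2.1 g, (he _).1, hact, smul_inv_smul]

theorem Ext1Vanishes.of_retract {C S Q : Type} [AddCommGroup C] [Module ℤ C]
    [AddCommGroup S] [Module ℤ S] [AddCommGroup Q] [Module ℤ Q] {ρC : Representation ℤ Γ C}
    {ρS : Representation ℤ Γ S} {ρQ : Representation ℤ Γ Q} (h : Ext1Vanishes ρS ρC)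
    {i : Q →ₗ[ℤ] S} {p : S →ₗ[ℤ] Q} (hi : IsEquivariantMap ρQ ρS i)
    (hp : IsEquivariantMap ρS ρQ p) (hpi : p ∘ₗ i = LinearMap.id) : Ext1Vanishes ρQ ρC := by
  intro E _ _ ρE ι π hse
  obtain ⟨P, _, _, ρP, ι', π', k, hse', hk, hπk⟩ := hse.exists_pullback hp
  obtain ⟨s', hs', hπs'⟩ := h P ρP ι' π' hse'
  refine ⟨k ∘ₗ s' ∘ₗ i, fun g x => ?_, ?_⟩
  · simp only [LinearMap.comp_apply, hi g x, hs' g, hk g]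
  · calc π ∘ₗ k ∘ₗ s' ∘ₗ i = p ∘ₗ (π' ∘ₗ s') ∘ₗ i := by
          rw [← LinearMap.comp_assoc, hπk]; rfl
      _ = LinearMap.id := by rw [hπs', LinearMap.id_comp, hpi]

theorem Ext1Vanishes.exists_extension {M N Q C : Type} [AddCommGroup M] [Module ℤ M]
    [AddCommGroup N] [Module ℤ N] [AddCommGroup Q] [Module ℤ Q] [AddCommGroup C] [Module ℤ C]
    {ρM : Representation ℤ Γ M} {ρN : Representation ℤ Γ N} {ρQ : Representation ℤ Γ Q}
    {ρC : Representation ℤ Γ C} (h : Ext1Vanishes ρQ ρC) {γ : M →ₗ[ℤ] N} {q : N →ₗ[ℤ] Q}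
    (hse : IsShortExactSeq ρM ρN ρQ γ q) {α : M →ₗ[ℤ] C} (hα : IsEquivariantMap ρM ρC α) :
    ∃ φ : N →ₗ[ℤ] C, IsEquivariantMap ρN ρC φ ∧ φ ∘ₗ γ = α := by
  obtain ⟨E, _, _, ρE, ι, π, j, hseE, hj, hjγ⟩ := hse.exists_pushout hα
  obtain ⟨s, hs, hπs⟩ := h E ρE ι π hseE
  obtain ⟨r, hr, hrι⟩ := hseE.exists_retraction hs hπs
  refine ⟨r ∘ₗ j, fun g n => by simp only [LinearMap.comp_apply, hj g n, hr g], ?_⟩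
  rw [LinearMap.comp_assoc, hjγ, ← LinearMap.comp_assoc, hrι, LinearMap.id_comp]

theorem coflasque_resolution_second_type_versal_general
    {Γ : Type} [Group Γ]
    (M C P N Q : GammaLattice Γ)
    (hC : C.IsCoflasque) (hQ : Q.IsInvertible)
    (α : M.carrier →ₗ[ℤ] C.carrier) (p : C.carrier →ₗ[ℤ] P.carrier)
    (hse₁ : IsShortExactSeq M.ρ C.ρ P.ρ α p)
    (γmap : M.carrier →ₗ[ℤ] N.carrier) (q : N.carrier →ₗ[ℤ] Q.carrier)
    (hse₂ : IsShortExactSeq M.ρ N.ρ Q.ρ γmap q) :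
    ∃ φ : N.carrier →ₗ[ℤ] C.carrier,
      IsEquivariantMap N.ρ C.ρ φ ∧ φ.comp γmap = α := by
  obtain ⟨S, ⟨κ, b, hb⟩, i, r, hi, hr, hri⟩ := hQ
  have hS : Ext1Vanishes S.ρ C.ρ := ext1Vanishes_of_permutes hC b hb
  exact (hS.of_retract hi hr hri).exists_extension hse₂ hse₁.1

/-- versality of coflasque resolutions of the second type:
given `0 → M →[α] C → P → 0` with `C` coflasque and `P` permutation,
and any extension `0 → M →[γ] N → Q → 0` with `Q` invertible, there is
`φ : N → C` with `φ ∘ γ = α`. -/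
theorem coflasque_resolution_second_type_versal
    {Γ : Type} [Group Γ] [Finite Γ]
    (M C P N Q : GammaLattice Γ)
    (hC : C.IsCoflasque) (hP : P.IsPermutation) (hQ : Q.IsInvertible)
    (α : M.carrier →ₗ[ℤ] C.carrier) (p : C.carrier →ₗ[ℤ] P.carrier)
    (hse₁ : IsShortExactSeq M.ρ C.ρ P.ρ α p)
    (γmap : M.carrier →ₗ[ℤ] N.carrier) (q : N.carrier →ₗ[ℤ] Q.carrier)
    (hse₂ : IsShortExactSeq M.ρ N.ρ Q.ρ γmap q) :
    ∃ φ : N.carrier →ₗ[ℤ] C.carrier,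
      IsEquivariantMap N.ρ C.ρ φ ∧ φ.comp γmap = α :=
  coflasque_resolution_second_type_versal_general M C P N Q hC hQ α p hse₁ γmap q hse₂
end

section
/- Let Γ be a finite group and let 0 → C → H → Q → 0 be a short exact sequence of Γ-lattices in which C is coflasque and Q is invertible. Then the sequence splits, so H ≅ C ⊕ Q as ℤ[Γ]-modules, and H is coflasque. -/
variable {Γ : Type} [Group Γ]

/-!
Over every subgroup `Γ'`, the vanishing of `H¹(Γ', C)` lets `Γ'`-invariants of `Q` lift to
`Γ'`-invariants of `H`. An equivariant map out of a permutation lattice `P` amounts to a choice,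
for one basis vector per orbit, of an image fixed by its stabilizer; hence every equivariant map
`P → Q` lifts to `H`, and restricting the lift to a summand `Q ⊆ P` splits the sequence.
`H` is then coflasque by exactness of `H¹(Γ', C) → H¹(Γ', H) → H¹(Γ', Q)`, where `H¹(Γ', Q)`
vanishes as `Q` is a summand of a permutation lattice: `|Γ'|` kills `H¹(Γ', P)`, and on a
permutation basis the witness of `|Γ'| • c` becomes divisible by `|Γ'|` after subtracting a
vector that is constant on orbits.
-/

open groupCohomology

section Cohomology

variable {k G M : Type} [CommRing k] [Group G] [AddCommGroup M] [Module k M]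

theorem subsingleton_H1_iff (ρ : Representation k G M) :
    Subsingleton (H1 (Rep.of ρ)) ↔
      ∀ c : G → M, (∀ g h, c (g * h) = ρ g (c h) + c g) → ∃ x, ∀ g, c g = ρ g x - x := by
  constructor
  · intro _ c hc
    let c' : cocycles₁ (Rep.of ρ) := ⟨c, (mem_cocycles₁_iff (A := Rep.of ρ) c).2 hc⟩
    obtain ⟨x, hx⟩ := (H1π_eq_zero_iff c').1 (Subsingleton.elim _ _)
    exact ⟨x, fun g => (congrFun hx g).symm⟩
  · intro h
    refine subsingleton_of_forall_eq 0 fun a => H1_induction_on a fun c => ?_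
    obtain ⟨x, hx⟩ := h c ((mem_cocycles₁_iff c).1 c.2)
    exact (H1π_eq_zero_iff c).2 ⟨x, funext fun g => (hx g).symm⟩

theorem card_smul_cocycle_eq [Fintype G] (ρ : Representation k G M) {c : G → M}
    (hc : ∀ g h, c (g * h) = ρ g (c h) + c g) (g : G) :
    Fintype.card G • c g = ρ g (-∑ h, c h) - -∑ h, c h := by
  have hsum : ∑ h, c (g * h) = ∑ h, c h := Equiv.sum_comp (Equiv.mulLeft g) c
  simp only [hc, Finset.sum_add_distrib, ← map_sum, Finset.sum_const,
    Finset.card_univ] at hsum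
  rw [map_neg, neg_sub_neg]
  exact eq_sub_of_add_eq' hsum

end Cohomology

section Equivariant

variable {A B C M N : Type} [AddCommGroup A] [Module ℤ A] [AddCommGroup B] [Module ℤ B]
  [AddCommGroup C] [Module ℤ C] [AddCommGroup M] [Module ℤ M] [AddCommGroup N] [Module ℤ N]
  {ρA : Representation ℤ Γ A} {ρB : Representation ℤ Γ B} {ρC : Representation ℤ Γ C}
  {ρM : Representation ℤ Γ M} {ρN : Representation ℤ Γ N}

theorem IsEquivariantMap.symm {e : M ≃ₗ[ℤ] N} (he : IsEquivariantMap ρM ρN e.toLinearMap) :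
    IsEquivariantMap ρN ρM e.symm.toLinearMap := fun γ n =>
  e.injective (by simpa using (he γ (e.symm n)).symm)

theorem IsShortExactSeq.restrict {f : A →ₗ[ℤ] B} {g : B →ₗ[ℤ] C}
    (hse : IsShortExactSeq ρA ρB ρC f g) (S : Subgroup Γ) :
    IsShortExactSeq (ρA.comp S.subtype) (ρB.comp S.subtype) (ρC.comp S.subtype) f g :=
  ⟨fun s => hse.1 s, fun s => hse.2.1 s, hse.2.2⟩

theorem IsShortExactSeq.exists_prod_equiv {f : A →ₗ[ℤ] B} {g : B →ₗ[ℤ] C}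
    (hse : IsShortExactSeq ρA ρB ρC f g) {s : C →ₗ[ℤ] B} (hs : IsEquivariantMap ρC ρB s)
    (hgs : g ∘ₗ s = LinearMap.id) :
    ∃ e : B ≃ₗ[ℤ] A × C, IsEquivariantMap ρB (prodRep ρA ρC) e.toLinearMap := by
  obtain ⟨hf, -, hinj, -, hexact⟩ := hse
  let e := (Function.Exact.splitSurjectiveEquiv (LinearMap.exact_iff.2 hexact.symm) hinj
    ⟨s, hgs⟩).1
  -- `Module ℤ (A × C)` elaborates to `AddCommGroup.toIntModule`, not to `Prod.instModule`.
  let e' : B ≃ₗ[ℤ] A × C := (e : B ≃+ A × C).toIntLinearEquiv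
  have he' : ∀ x, e'.symm x = f x.1 + s x.2 := fun x => rfl
  have he'_symm : IsEquivariantMap (prodRep ρA ρC) ρB e'.symm.toLinearMap := fun γ x => by
    show e'.symm (ρA γ x.1, ρC γ x.2) = ρB γ (e'.symm x)
    rw [he', he', hf, hs, map_add]
  exact ⟨e', he'_symm.symm⟩

theorem subsingleton_H1_of_retract {i : M →ₗ[ℤ] N} {p : N →ₗ[ℤ] M}
    (hi : IsEquivariantMap ρM ρN i) (hp : IsEquivariantMap ρN ρM p)
    (hpi : p ∘ₗ i = LinearMap.id) (hN : Subsingleton (H1 (Rep.of ρN))) :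
    Subsingleton (H1 (Rep.of ρM)) := by
  rw [subsingleton_H1_iff] at hN ⊢
  intro c hc
  obtain ⟨y, hy⟩ := hN (fun g => i (c g)) fun g h => by rw [hc, map_add, hi]
  refine ⟨p y, fun g => ?_⟩
  have hpi' : ∀ m, p (i m) = m := LinearMap.congr_fun hpi
  rw [← hpi' (c g), hy, map_sub, hp]

theorem subsingleton_H1_of_shortExact {f : A →ₗ[ℤ] B} {g : B →ₗ[ℤ] C}
    (hse : IsShortExactSeq ρA ρB ρC f g) (hA : Subsingleton (H1 (Rep.of ρA)))
    (hC : Subsingleton (H1 (Rep.of ρC))) : Subsingleton (H1 (Rep.of ρB)) := by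
  obtain ⟨hf, hg, hinj, hsurj, hexact⟩ := hse
  rw [subsingleton_H1_iff] at hA hC ⊢
  intro c hc
  obtain ⟨z, hz⟩ := hC (fun x => g (c x)) fun x x' => by rw [hc, map_add, hg]
  obtain ⟨y, rfl⟩ := hsurj z
  have hmem : ∀ x, c x - (ρB x y - y) ∈ LinearMap.range f := fun x => by
    rw [hexact, LinearMap.mem_ker, map_sub, map_sub, hg, hz, sub_self]
  choose a ha using hmem
  obtain ⟨w, hw⟩ := hA a fun x x' => hinj <| by
    rw [map_add, hf, ha, ha, ha, hc, map_mul, Module.End.mul_apply, map_sub, map_sub]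
    abel
  refine ⟨f w + y, fun x => ?_⟩
  rw [← sub_add_cancel (c x) (ρB x y - y), ← ha, hw, map_sub, hf, map_add]
  abel

theorem exists_invariant_preimage {f : A →ₗ[ℤ] B} {g : B →ₗ[ℤ] C}
    (hse : IsShortExactSeq ρA ρB ρC f g) (hA : Subsingleton (H1 (Rep.of ρA))) {z : C}
    (hz : ∀ x, ρC x z = z) : ∃ y, g y = z ∧ ∀ x, ρB x y = y := by
  obtain ⟨hf, hg, hinj, hsurj, hexact⟩ := hse
  obtain ⟨y, rfl⟩ := hsurj z
  have hmem : ∀ x, ρB x y - y ∈ LinearMap.range f := fun x => by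
    rw [hexact, LinearMap.mem_ker, map_sub, hg, hz, sub_self]
  choose a ha using hmem
  obtain ⟨w, hw⟩ := (subsingleton_H1_iff ρA).1 hA a fun x x' => hinj <| by
    rw [map_add, hf, ha, ha, ha, map_mul, Module.End.mul_apply, map_sub]
    abel
  have hfw : g (f w) = 0 := LinearMap.mem_ker.1 (hexact ▸ LinearMap.mem_range_self f w)
  refine ⟨y - f w, by rw [map_sub, hfw, sub_zero], fun x => ?_⟩
  have hx : ρB x y - y = ρB x (f w) - f w := by rw [← ha, hw, map_sub, hf]
  rw [map_sub, ← sub_add_cancel (ρB x y) y, hx]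
  abel

end Equivariant

theorem MulAction.exists_orbit_transversal (G ι : Type) [Group G] [MulAction G ι] :
    ∃ (r : ι → ι) (t : ι → G), (∀ i, t i • r i = i) ∧ ∀ (g : G) i, r (g • i) = r i := by
  let r : ι → ι := fun i => (Quotient.mk (orbitRel G ι) i).out
  have hr : ∀ i, ∃ t : G, t • r i = i := fun i => by
    obtain ⟨g, hg⟩ := (orbitRel_apply.1 (Quotient.mk_out (s := orbitRel G ι) i))
    exact ⟨g⁻¹, by rw [inv_smul_eq_iff]; exact hg.symm⟩
  choose t ht using hr
  exact ⟨r, t, ht, fun g i => congrArg Quotient.out (Quotient.sound (mem_orbit i g))⟩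

section PermutationBasis

variable {ι M V : Type} [AddCommGroup M] [Module ℤ M] [AddCommGroup V] [Module ℤ V]
  {ρ : Representation ℤ Γ M} {b : Module.Basis ι ℤ M}

theorem exists_mulAction_of_basis_permuted (hb : ∀ (g : Γ) i, ∃ j, ρ g (b i) = b j) :
    ∃ _ : MulAction Γ ι, ∀ (g : Γ) i, ρ g (b i) = b (g • i) := by
  choose σ hσ using hb
  have one_smul : ∀ i, σ 1 i = i := fun i => b.injective (by rw [← hσ, map_one]; rfl)
  have mul_smul : ∀ g h i, σ (g * h) i = σ g (σ h i) := fun g h i =>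
    b.injective (by rw [← hσ, ← hσ, ← hσ, map_mul]; rfl)
  exact ⟨{ smul := σ, one_smul := one_smul, mul_smul := mul_smul }, hσ⟩

theorem repr_apply_of_basis_permuted [MulAction Γ ι] (hb : ∀ (g : Γ) i, ρ g (b i) = b (g • i))
    (g : Γ) (m : M) (j : ι) : b.repr (ρ g m) j = b.repr m (g⁻¹ • j) := by
  classical
  have h : Finsupp.lapply j ∘ₗ b.repr.toLinearMap ∘ₗ ρ g =
      Finsupp.lapply (g⁻¹ • j) ∘ₗ b.repr.toLinearMap :=
    b.ext fun i => by simp [hb, Finsupp.single_apply, smul_eq_iff_eq_inv_smul]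
  exact LinearMap.congr_fun h m

theorem subsingleton_H1_of_basis_permuted [Finite Γ] [Finite ι]
    (hb : ∀ (g : Γ) i, ∃ j, ρ g (b i) = b j) : Subsingleton (H1 (Rep.of ρ)) := by
  have := Fintype.ofFinite Γ
  have := Fintype.ofFinite ι
  obtain ⟨_, hb⟩ := exists_mulAction_of_basis_permuted hb
  obtain ⟨r, t, hrt, hr⟩ := MulAction.exists_orbit_transversal Γ ι
  have hr' : ∀ j, (t j)⁻¹ • j = r j := fun j => inv_smul_eq_iff.2 (hrt j).symm
  rw [subsingleton_H1_iff]
  intro c hc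
  set n : ℤ := (Fintype.card Γ : ℤ)
  set y : M := -∑ h, c h
  have hy : ∀ g j, n * b.repr (c g) j = b.repr y (g⁻¹ • j) - b.repr y j := fun g j => by
    rw [← smul_eq_mul, natCast_zsmul, ← Finsupp.smul_apply, ← map_nsmul,
      card_smul_cocycle_eq ρ hc, map_sub, Finsupp.sub_apply, repr_apply_of_basis_permuted hb]
  -- `|Γ| • x = y - y'`, where `y'` is the invariant vector with coordinates `y'ⱼ = y_{r j}`
  obtain ⟨x, hx⟩ : ∃ x : M, ∀ j, b.repr x j = -b.repr (c (t j)) j :=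
    ⟨b.equivFun.symm _, fun j => by rw [← b.equivFun_apply, b.equivFun.apply_symm_apply]⟩
  refine ⟨x, fun g => b.repr.injective (Finsupp.ext fun j => ?_)⟩
  apply mul_left_cancel₀ (show n ≠ 0 by positivity)
  have h₁ := hy g j
  have h₂ := hy (t (g⁻¹ • j)) (g⁻¹ • j)
  have h₃ := hy (t j) j
  rw [hr', hr] at h₂
  rw [hr'] at h₃
  simp only [map_sub, Finsupp.sub_apply, repr_apply_of_basis_permuted hb, hx]
  linear_combination h₁ + h₂ - h₃

theorem exists_equivariant_fun [MulAction Γ ι] (ρV : Representation ℤ Γ V) (P : ι → V → Prop)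
    (hP : ∀ (g : Γ) i v, P i v → P (g • i) (ρV g v))
    (hw : ∀ i, ∃ v, P i v ∧ ∀ g ∈ MulAction.stabilizer Γ i, ρV g v = v) :
    ∃ f : ι → V, (∀ (g : Γ) i, f (g • i) = ρV g (f i)) ∧ ∀ i, P i (f i) := by
  obtain ⟨r, t, hrt, hr⟩ := MulAction.exists_orbit_transversal Γ ι
  choose w hPw hw using hw
  have hwell : ∀ (g : Γ) i, g • r i = i → ρV g (w (r i)) = ρV (t i) (w (r i)) := by
    intro g i hg
    have hs : (t i)⁻¹ * g ∈ MulAction.stabilizer Γ (r i) := by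
      rw [MulAction.mem_stabilizer_iff, mul_smul, hg, inv_smul_eq_iff, hrt]
    rw [← mul_inv_cancel_left (t i) g, map_mul, Module.End.mul_apply, hw _ _ hs]
  refine ⟨fun i => ρV (t i) (w (r i)), fun g i => ?_, fun i => ?_⟩
  · dsimp only
    rw [← hwell (g * t i) (g • i) (by rw [hr, mul_smul, hrt]), hr, map_mul,
      Module.End.mul_apply]
  · simpa only [hrt] using hP (t i) (r i) _ (hPw (r i))

theorem isEquivariantMap_constr [MulAction Γ ι] (hb : ∀ (g : Γ) i, ρ g (b i) = b (g • i))
    {ρV : Representation ℤ Γ V} {f : ι → V} (hf : ∀ (g : Γ) i, f (g • i) = ρV g (f i)) :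
    IsEquivariantMap ρ ρV (b.constr ℕ f) := fun g m => by
  have h : b.constr ℕ f ∘ₗ ρ g = ρV g ∘ₗ b.constr ℕ f :=
    b.ext fun i => by simp [hb, hf]
  exact LinearMap.congr_fun h m

theorem exists_equivariant_lift_of_basis_permuted {B C : Type} [AddCommGroup B] [Module ℤ B]
    [AddCommGroup C] [Module ℤ C] {ρB : Representation ℤ Γ B} {ρC : Representation ℤ Γ C}
    (hb : ∀ (g : Γ) i, ∃ j, ρ g (b i) = b j) {p : M →ₗ[ℤ] C} (hp : IsEquivariantMap ρ ρC p)
    {π : B →ₗ[ℤ] C} (hπ : IsEquivariantMap ρB ρC π)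
    (hlift : ∀ (S : Subgroup Γ) (z : C), (∀ s ∈ S, ρC s z = z) →
      ∃ y, π y = z ∧ ∀ s ∈ S, ρB s y = y) :
    ∃ L : M →ₗ[ℤ] B, IsEquivariantMap ρ ρB L ∧ π ∘ₗ L = p := by
  obtain ⟨_, hb⟩ := exists_mulAction_of_basis_permuted hb
  obtain ⟨f, hf, hπf⟩ := exists_equivariant_fun ρB (fun i y => π y = p (b i))
    (fun g i y hy => by rw [hπ, hy, ← hp, hb])
    (fun i => hlift _ _ fun s hs => by rw [← hp, hb, MulAction.mem_stabilizer_iff.1 hs])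
  exact ⟨b.constr ℕ f, isEquivariantMap_constr hb hf, b.ext fun i => by simp [hπf]⟩

end PermutationBasis

namespace GammaLattice

theorem IsPermutation.isCoflasque [Finite Γ] {N : GammaLattice Γ} (hN : N.IsPermutation) :
    N.IsCoflasque := by
  obtain ⟨ι, b, hb⟩ := hN
  have := N.finite
  have := Module.Finite.finite_basis b
  exact fun S => subsingleton_H1_of_basis_permuted (ρ := N.ρ.comp S.subtype) fun s i => hb s i

theorem IsInvertible.isCoflasque [Finite Γ] {Q : GammaLattice Γ} (hQ : Q.IsInvertible) :
    Q.IsCoflasque := by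
  obtain ⟨N, hN, i, p, hi, hp, hpi⟩ := hQ
  exact fun S => subsingleton_H1_of_retract (fun s => hi s) (fun s => hp s) hpi
    (hN.isCoflasque S)

theorem isCoflasque_of_shortExact {C H Q : GammaLattice Γ} {ι : C.carrier →ₗ[ℤ] H.carrier}
    {π : H.carrier →ₗ[ℤ] Q.carrier} (hse : IsShortExactSeq C.ρ H.ρ Q.ρ ι π)
    (hC : C.IsCoflasque) (hQ : Q.IsCoflasque) : H.IsCoflasque := fun S =>
  subsingleton_H1_of_shortExact (hse.restrict S) (hC S) (hQ S)

theorem ext1Vanishes_of_isCoflasque_of_isInvertible {C Q : GammaLattice Γ} (hC : C.IsCoflasque)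
    (hQ : Q.IsInvertible) : Ext1Vanishes Q.ρ C.ρ := by
  intro E _ _ ρE ι π hse
  obtain ⟨N, ⟨_, b, hb⟩, i, p, hi, hp, hpi⟩ := hQ
  obtain ⟨L, hL, hπL⟩ := exists_equivariant_lift_of_basis_permuted hb hp hse.2.1
    fun S z hz => by
      obtain ⟨y, hπy, hy⟩ := exists_invariant_preimage (hse.restrict S) (hC S) fun s => hz s s.2
      exact ⟨y, hπy, fun s hs => hy ⟨s, hs⟩⟩
  refine ⟨L ∘ₗ i, fun γ q => ?_, by rw [← LinearMap.comp_assoc, hπL, hpi]⟩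
  show L (i (Q.ρ γ q)) = ρE γ (L (i q))
  rw [hi, hL]

end GammaLattice

/-- a short exact sequence `0 → C → H → Q → 0` of Γ-lattices
with `C` coflasque and `Q` invertible splits, so `H ≅ C ⊕ Q` as
`ℤ[Γ]`-modules, and `H` is coflasque. -/
theorem coflasque_extension_by_invertible_splits
    {Γ : Type} [Group Γ] [Finite Γ]
    (C H Q : GammaLattice Γ) (hC : C.IsCoflasque) (hQ : Q.IsInvertible)
    (ι : C.carrier →ₗ[ℤ] H.carrier) (π : H.carrier →ₗ[ℤ] Q.carrier)
    (hse : IsShortExactSeq C.ρ H.ρ Q.ρ ι π) :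
    (∃ s : Q.carrier →ₗ[ℤ] H.carrier,
        IsEquivariantMap Q.ρ H.ρ s ∧ π.comp s = LinearMap.id) ∧
    (∃ e : H.carrier ≃ₗ[ℤ] (C.carrier × Q.carrier),
        IsEquivariantMap H.ρ (prodRep C.ρ Q.ρ) e.toLinearMap) ∧
    H.IsCoflasque := by
  obtain ⟨s, hs, hπs⟩ :=
    GammaLattice.ext1Vanishes_of_isCoflasque_of_isInvertible hC hQ H.carrier H.ρ ι π hse
  exact ⟨⟨s, hs, hπs⟩, hse.exists_prod_equiv hs hπs,
    GammaLattice.isCoflasque_of_shortExact hse hC hQ.isCoflasque⟩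
end
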